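/- arXiv:2205.05605 — 4 statements merged into one kernel-verified Lean document; each statement's English description precedes it below -/
import Mathlib

section
/- Let f ∈ ℍ[X] have degree 2n with n ≥ 1, and suppose there exist spherical roots λ₁, …, λ_n ∈ ℍ \ ℝ of f that are pairwise not quadratically equivalent. Then there exist c ∈ ℍ and g ∈ ℝ[X] such that f = c • (g.map φ), where φ : ℝ → ℍ is the canonical algebra map; i.e., f is a scalar multiple of a polynomial with real coefficients. -/
/-!
For non-real `λ`, the real polynomial `p_λ = X² - tr(λ) X + n(λ)` is central in `ℍ[X]`, so
dividing `f` by it leaves a remainder `a X + b` that vanishes at the two distinct roots `λ` and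
`λ̄` of `p_λ`; hence `p_λ ∣ f`. The `p_{λᵢ}` are irreducible over `ℝ` and pairwise distinct, hence
pairwise coprime, and a Bézout identity in the central subring `ℝ[X]` shows that their product,
a monic real polynomial of degree `2n`, divides `f`. Comparing degrees, the cofactor is a constant.
-/

open Polynomial
open scoped Quaternion

/-- A spherical root of `f ∈ ℍ[X]`: a non-real `λ` such that every root of the
characteristic polynomial `p_λ(x) = x² − tr(λ)x + n(λ)` of `λ` is a root of `f`. -/
def SphericalRoot (f : Polynomial (Quaternion ℝ)) (lam : Quaternion ℝ) : Prop :=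
  lam ∉ Set.range (algebraMap ℝ (Quaternion ℝ)) ∧
    ∀ r : Quaternion ℝ,
      r ^ 2 - (2 * lam.re) • r + ((Quaternion.normSq lam : ℝ) : Quaternion ℝ) = 0 →
        Polynomial.eval r f = 0

/-- Quadratic equivalence on ℍ: equal traces and norms. -/
def QuadEquiv (r lam : Quaternion ℝ) : Prop :=
  2 * r.re = 2 * lam.re ∧ Quaternion.normSq r = Quaternion.normSq lam

section CentralDivisibility

variable {R A : Type*} [CommSemiring R] [Semiring A] [Algebra R A]

theorem IsCoprime.algebraMap_mul_dvd {a b : R} (hab : IsCoprime a b) {f : A}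
    (ha : algebraMap R A a ∣ f) (hb : algebraMap R A b ∣ f) : algebraMap R A (a * b) ∣ f := by
  obtain ⟨u, v, huv⟩ := hab
  obtain ⟨x, hx⟩ := ha
  obtain ⟨y, hy⟩ := hb
  rw [← Algebra.smul_def] at hx hy
  refine ⟨u • y + v • x, ?_⟩
  rw [← Algebra.smul_def]
  calc f = (u * a) • f + (v * b) • f := by rw [← add_smul, huv, one_smul]
    _ = (a * b) • (u • y + v • x) := by
      nth_rw 1 [hy]; rw [hx, smul_add, smul_smul, smul_smul, smul_smul, smul_smul]
      congr 2 <;> ring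

theorem Finset.algebraMap_prod_dvd_of_coprime {ι : Type*} {s : Finset ι} {p : ι → R}
    (hp : (s : Set ι).Pairwise fun i j ↦ IsCoprime (p i) (p j)) {f : A}
    (hf : ∀ i ∈ s, algebraMap R A (p i) ∣ f) : algebraMap R A (∏ i ∈ s, p i) ∣ f := by
  classical
  induction s using Finset.induction_on with
  | empty => simp
  | insert i s his ih =>
    rw [Finset.prod_insert his]
    refine IsCoprime.algebraMap_mul_dvd ?_ (hf i (mem_insert_self i s)) ?_
    · exact IsCoprime.prod_right fun j hj ↦
        hp (by simp) (by simp [hj]) (ne_of_mem_of_not_mem hj his).symm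
    · exact ih (hp.mono (by simp)) fun j hj ↦ hf j (mem_insert_of_mem hj)

end CentralDivisibility

attribute [local instance] Polynomial.algebra

theorem Polynomial.eval_mul_algebraMap {R D : Type*} [CommSemiring R] [Semiring D] [Algebra R D]
    (q : D[X]) (p : R[X]) (r : D) :
    eval r (q * algebraMap R[X] D[X] p) = eval r q * aeval r p := by
  rw [aeval_def, ← eval_map, eval, eval₂_mul_noncomm, ← eval, ← eval]
  · rfl
  · intro k
    rw [RingHom.id_apply, Polynomial.algebraMap_def, coe_mapRingHom, coeff_map]
    exact Algebra.commute_algebraMap_left _ r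

theorem Polynomial.algebraMap_dvd_of_eval_eq_zero {R D : Type*} [CommRing R] [Ring D]
    [IsDomain D] [Algebra R D] {p : R[X]} (hmonic : p.Monic) (hdeg : p.natDegree ≤ 2)
    {r₁ r₂ : D} (hr : r₁ ≠ r₂) (hp₁ : aeval r₁ p = 0) (hp₂ : aeval r₂ p = 0)
    {f : D[X]} (hf₁ : f.eval r₁ = 0) (hf₂ : f.eval r₂ = 0) :
    algebraMap R[X] D[X] p ∣ f := by
  set P := algebraMap R[X] D[X] p
  set ρ := f %ₘ P
  have hρ : ρ = C (ρ.coeff 1) * X + C (ρ.coeff 0) := by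
    refine eq_X_add_C_of_degree_le_one (Order.le_of_lt_succ ?_)
    calc ρ.degree < P.degree := degree_modByMonic_lt f (hmonic.map _)
      _ ≤ 2 := degree_map_le.trans (degree_le_of_natDegree_le hdeg)
  have hρ_eval : ∀ r, aeval r p = 0 → f.eval r = 0 → ρ.coeff 1 * r + ρ.coeff 0 = 0 := by
    intro r hp hf
    have hdiv : f = f /ₘ P * P + ρ := by
      rw [← Algebra.commutes, add_comm, modByMonic_add_div]
    have := congrArg (eval r) hdiv
    rwa [eval_add, eval_mul_algebraMap, hp, mul_zero, zero_add, hf, eq_comm, hρ,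
      eval_add, eval_C_mul, eval_X, eval_C] at this
  have h₁ : ρ.coeff 1 = 0 := by
    have : ρ.coeff 1 * (r₁ - r₂) = 0 := by
      calc ρ.coeff 1 * (r₁ - r₂)
          = (ρ.coeff 1 * r₁ + ρ.coeff 0) - (ρ.coeff 1 * r₂ + ρ.coeff 0) := by noncomm_ring
        _ = 0 := by rw [hρ_eval r₁ hp₁ hf₁, hρ_eval r₂ hp₂ hf₂, sub_self]
    exact (mul_eq_zero.mp this).resolve_right (sub_ne_zero.mpr hr)
  have h₀ : ρ.coeff 0 = 0 := by simpa [h₁] using hρ_eval r₁ hp₁ hf₁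
  have hρ0 : ρ = 0 := by rw [hρ, h₁, h₀]; simp
  exact ⟨f /ₘ P, by rw [← zero_add (P * _), ← hρ0, modByMonic_add_div]⟩

namespace Quaternion

noncomputable def charpoly (q : ℍ[ℝ]) : ℝ[X] := X ^ 2 - C (2 * q.re) * X + C (normSq q)

theorem charpoly_eq_quadratic (q : ℍ[ℝ]) :
    charpoly q = C 1 * X ^ 2 + C (-(2 * q.re)) * X + C (normSq q) := by
  simp [charpoly, sub_eq_add_neg]

theorem natDegree_charpoly (q : ℍ[ℝ]) : (charpoly q).natDegree = 2 := by
  rw [charpoly_eq_quadratic, natDegree_quadratic one_ne_zero]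

theorem charpoly_monic (q : ℍ[ℝ]) : (charpoly q).Monic := by
  rw [Monic, leadingCoeff, natDegree_charpoly, charpoly_eq_quadratic]
  simp

theorem charpoly_star (q : ℍ[ℝ]) : charpoly (star q) = charpoly q := by
  rw [charpoly, charpoly, re_star, normSq_star]

theorem aeval_charpoly (q r : ℍ[ℝ]) :
    aeval r (charpoly q) = r ^ 2 - (2 * q.re) • r + ((normSq q : ℝ) : ℍ[ℝ]) := by
  simp [charpoly, Algebra.smul_def, algebraMap_def]

theorem aeval_self_charpoly (q : ℍ[ℝ]) : aeval q (charpoly q) = 0 := by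
  rw [aeval_charpoly, ← coe_mul_eq_smul, ← self_add_star', ← star_mul_self]
  noncomm_ring

theorem charpoly_eq_charpoly_iff {p q : ℍ[ℝ]} : charpoly p = charpoly q ↔ QuadEquiv p q := by
  refine ⟨fun h ↦ ⟨?_, ?_⟩, fun ⟨hre, hnorm⟩ ↦ by rw [charpoly, charpoly, hre, hnorm]⟩
  · simpa [charpoly_eq_quadratic] using congrArg (coeff · 1) h
  · simpa [charpoly_eq_quadratic] using congrArg (coeff · 0) h

theorem re_sq_lt_normSq {q : ℍ[ℝ]} (hq : q ∉ Set.range (algebraMap ℝ ℍ[ℝ])) :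
    q.re ^ 2 < normSq q := by
  have hsplit : normSq q = q.re ^ 2 + normSq q.im := by simp [normSq_def']; ring
  contrapose! hq
  have him : q.im = 0 := normSq_le_zero.mp (by linarith)
  exact ⟨q.re, by simpa [algebraMap_def, him] using re_add_im q⟩

theorem irreducible_charpoly {q : ℍ[ℝ]} (hq : q ∉ Set.range (algebraMap ℝ ℍ[ℝ])) :
    Irreducible (charpoly q) := by
  refine irreducible_of_degree_le_three_of_not_isRoot (by simp [natDegree_charpoly]) fun x hx ↦ ?_
  have := re_sq_lt_normSq hq
  have hx : x ^ 2 - 2 * q.re * x + normSq q = 0 := by simpa [charpoly] using hx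
  nlinarith [sq_nonneg (x - q.re)]

theorem isCoprime_charpoly {p q : ℍ[ℝ]} (hp : p ∉ Set.range (algebraMap ℝ ℍ[ℝ]))
    (hpq : ¬QuadEquiv p q) : IsCoprime (charpoly p) (charpoly q) :=
  (irreducible_charpoly hp).coprime_iff_not_dvd.mpr fun h ↦ hpq <| charpoly_eq_charpoly_iff.mp <|
    (eq_of_monic_of_dvd_of_natDegree_le (charpoly_monic p) (charpoly_monic q) h
      (by rw [natDegree_charpoly, natDegree_charpoly])).symm

end Quaternion

open Quaternion in
theorem SphericalRoot.algebraMap_charpoly_dvd {f : ℍ[ℝ][X]} {q : ℍ[ℝ]} (h : SphericalRoot f q) :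
    algebraMap ℝ[X] ℍ[ℝ][X] (charpoly q) ∣ f := by
  have hroot : ∀ r, aeval r (charpoly q) = 0 → f.eval r = 0 :=
    fun r hr ↦ h.2 r (by rwa [← aeval_charpoly])
  have hstar : aeval (star q) (charpoly q) = 0 := by rw [← charpoly_star, aeval_self_charpoly]
  have hne : q ≠ star q :=
    fun hq ↦ h.1 ⟨q.re, by rw [Quaternion.algebraMap_def]; exact (star_eq_self.mp hq.symm).symm⟩
  exact algebraMap_dvd_of_eval_eq_zero (charpoly_monic q) (natDegree_charpoly q).le hne
    (aeval_self_charpoly q) hstar (hroot q (aeval_self_charpoly q)) (hroot _ hstar)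

open Quaternion in
theorem poly_with_max_spherical_roots_is_scalar_multiple_of_real_poly_general
    (f : Polynomial (Quaternion ℝ)) (n : ℕ)
    (hdeg : f.natDegree = 2 * n)
    (lam : Fin n → Quaternion ℝ)
    (hsph : ∀ i, SphericalRoot f (lam i))
    (hne : ∀ i j, i ≠ j → ¬ QuadEquiv (lam i) (lam j)) :
    ∃ (c : Quaternion ℝ) (g : Polynomial ℝ),
      f = c • g.map (algebraMap ℝ (Quaternion ℝ)) := by
  set g := ∏ i, charpoly (lam i)
  have hdvd : algebraMap ℝ[X] ℍ[ℝ][X] g ∣ f :=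
    Finset.algebraMap_prod_dvd_of_coprime
      (fun i _ j _ hij ↦ isCoprime_charpoly (hsph i).1 (hne i j hij))
      fun i _ ↦ (hsph i).algebraMap_charpoly_dvd
  have hmonic : g.Monic := monic_prod_of_monic _ _ fun i _ ↦ charpoly_monic (lam i)
  have hg_deg : g.natDegree = 2 * n := by
    simp [g, natDegree_prod_of_monic _ _ fun i _ ↦ charpoly_monic (lam i), natDegree_charpoly,
      mul_comm]
  obtain ⟨c, hc⟩ : ∃ c, f = algebraMap ℝ[X] ℍ[ℝ][X] g * C c :=
    ⟨_, eq_mul_leadingCoeff_of_monic_of_dvd_of_natDegree_le (hmonic.map _) hdvd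
      (by rw [Polynomial.algebraMap_def, coe_mapRingHom, natDegree_map, hdeg, hg_deg])⟩
  exact ⟨c, g, by rw [hc, Algebra.commutes, smul_eq_C_mul]; rfl⟩

theorem poly_with_max_spherical_roots_is_scalar_multiple_of_real_poly
    (f : Polynomial (Quaternion ℝ)) (n : ℕ) (hn : 1 ≤ n)
    (hdeg : f.natDegree = 2 * n)
    (lam : Fin n → Quaternion ℝ)
    (hsph : ∀ i, SphericalRoot f (lam i))
    (hne : ∀ i j, i ≠ j → ¬ QuadEquiv (lam i) (lam j)) :
    ∃ (c : Quaternion ℝ) (g : Polynomial ℝ),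
      f = c • g.map (algebraMap ℝ (Quaternion ℝ)) :=
  poly_with_max_spherical_roots_is_scalar_multiple_of_real_poly_general f n hdeg lam hsph hne
end

section
/- Let f ∈ ℍ[X] be a quadratic polynomial (deg f = 2). Then every root of the formal derivative f′ lies in the convex hull (taken in the real normed space ℍ ≅ ℝ⁴) of the set {r ∈ ℍ | eval r C_f = 0} of roots of the companion polynomial of f. -/
open Polynomial

/-- The conjugate polynomial `conj(f) = ∑ₖ (star aₖ) Xᵏ`. -/
noncomputable def polyConj (f : Polynomial (Quaternion ℝ)) : Polynomial (Quaternion ℝ) :=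
  f.sum fun k a => C (star a) * X ^ k

/-- The companion polynomial `C_f = conj(f) · f`. -/
noncomputable def companion (f : Polynomial (Quaternion ℝ)) : Polynomial (Quaternion ℝ) :=
  polyConj f * f

/-!
Every quadratic `f ∈ ℍ[X]` factors as `a (X - u) (X - v)`. We have `C_{gh} = conj(h) C_g h`,
which equals `C_g C_h` as soon as `C_g` is real, hence central. With `C_a = |a|²` and
`C_{X - w} = χ_w := X² - 2 Re(w) X + |w|²`, a real polynomial annihilating `w`, this gives
`C_f = |a|² χ_u χ_v`, so `u` and `v` are roots of `C_f`; meanwhile `f′ = a (2X - (u + v))`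
vanishes only at the midpoint of `u` and `v`.

The factorization rests on the existence of a root of `X² + bX + c`. Let `z ∈ ℂ` be a root of
the complexification of the real quartic `x ↦ |x² + bx + c|²`, and write
`X² + bX + c = χ_z + dX + e`. Every quaternion on the 2-sphere `{v | Re v = Re z, |v| = |z|}`
is a root of `χ_z`, and the vanishing at `z` is exactly what makes `d v + e = 0` solvable on
that sphere.
-/

open Quaternion

namespace Polynomial

variable {R : Type*} [Ring R]

theorem X_sub_C_mul_X_sub_C (u v : R) :
    (X - C u) * (X - C v) = X ^ 2 - C (u + v) * X + C (u * v) := by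
  rw [sub_mul, mul_sub, mul_sub, X_mul_C, C_add, C_mul, add_mul, pow_two]
  abel

theorem eval_derivative_C_mul_X_sub_C_mul_X_sub_C (a u v r : R) :
    eval r (derivative (C a * (X - C u) * (X - C v))) = a * (2 * r - (u + v)) := by
  rw [mul_assoc, X_sub_C_mul_X_sub_C]
  simp [one_add_one_eq_two]

theorem commute_map_algebraMap {S A : Type*} [CommSemiring S] [Semiring A] [Algebra S A]
    (p : S[X]) (q : A[X]) : Commute (p.map (algebraMap S A)) q := by
  induction p using Polynomial.induction_on' with
  | add p₁ p₂ h₁ h₂ => simpa only [Polynomial.map_add] using h₁.add_left h₂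
  | monomial n r =>
    rw [map_monomial, ← C_mul_X_pow_eq_monomial, ← Polynomial.algebraMap_apply]
    exact (Algebra.commute_algebraMap_left r q).mul_left (commute_X_pow q n)

end Polynomial

namespace Quaternion

variable {R : Type*} [CommRing R]

noncomputable def reducedCharpoly (u : ℍ[R]) : R[X] :=
  X ^ 2 - C (2 * u.re) * X + C (normSq u)

theorem aeval_reducedCharpoly (u v : ℍ[R]) :
    aeval v (reducedCharpoly u) = v ^ 2 - (2 * u.re : R) * v + (normSq u : R) := by
  rw [reducedCharpoly, map_add, map_sub, map_mul, aeval_X_pow, aeval_X, aeval_C, aeval_C,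
    algebraMap_def]

theorem aeval_reducedCharpoly_self (u : ℍ[R]) : aeval u (reducedCharpoly u) = 0 := by
  have h2 : ((2 * u.re : R) : ℍ[R]) = u + star u := by rw [self_add_star, coe_mul]; rfl
  rw [aeval_reducedCharpoly, h2, ← star_mul_self]
  noncomm_ring

theorem normSq_mul_coe_add (d e : ℍ[R]) (x : R) :
    normSq (d * (x : ℍ[R]) + e) = normSq d * x ^ 2 + 2 * (d * star e).re * x + normSq e := by
  rw [normSq_add, map_mul, normSq_coe, mul_coe_eq_smul, smul_mul_assoc, re_smul, smul_eq_mul]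
  ring

end Quaternion

@[simp]
theorem coeff_polyConj (f : ℍ[ℝ][X]) (n : ℕ) : (polyConj f).coeff n = star (f.coeff n) := by
  simp only [polyConj, Polynomial.sum, finsetSum_coeff, coeff_C_mul_X_pow, Finset.sum_ite_eq]
  split_ifs with h
  · rfl
  · rw [notMem_support_iff.mp h, star_zero]

theorem polyConj_mul (f g : ℍ[ℝ][X]) : polyConj (f * g) = polyConj g * polyConj f := by
  ext n : 1
  simp only [coeff_polyConj, coeff_mul, star_sum, star_mul]
  exact Finset.Nat.sum_antidiagonal_swap (f := fun p => star (g.coeff p.1) * star (f.coeff p.2))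

theorem polyConj_C (a : ℍ[ℝ]) : polyConj (C a) = C (star a) := by
  ext n : 1
  simp [coeff_C, apply_ite star]

theorem polyConj_X_sub_C (u : ℍ[ℝ]) : polyConj (X - C u) = X - C (star u) := by
  ext n : 1
  simp [coeff_X, coeff_C, apply_ite star]

theorem companion_C (a : ℍ[ℝ]) :
    companion (C a) = (C (normSq a)).map (algebraMap ℝ ℍ[ℝ]) := by
  rw [companion, polyConj_C, ← C_mul, star_mul_self, map_C]
  rfl

theorem companion_X_sub_C (u : ℍ[ℝ]) :
    companion (X - C u) = (reducedCharpoly u).map (algebraMap ℝ ℍ[ℝ]) := by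
  have h2 : algebraMap ℝ ℍ[ℝ] (2 * u.re) = star u + u := by
    rw [star_add_self, map_mul, map_ofNat]
    rfl
  have h3 : algebraMap ℝ ℍ[ℝ] (normSq u) = star u * u := (star_mul_self u).symm
  simp only [companion, polyConj_X_sub_C, X_sub_C_mul_X_sub_C, reducedCharpoly, Polynomial.map_add,
    Polynomial.map_sub, Polynomial.map_mul, Polynomial.map_pow, map_X, map_C, h2, h3]

theorem companion_mul_of_eq_map {f : ℍ[ℝ][X]} {p : ℝ[X]}
    (hf : companion f = p.map (algebraMap ℝ ℍ[ℝ])) (g : ℍ[ℝ][X]) :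
    companion (f * g) = p.map (algebraMap ℝ ℍ[ℝ]) * companion g := by
  rw [companion, polyConj_mul, mul_assoc, ← mul_assoc (polyConj f), ← companion, hf,
    ← mul_assoc, ← (commute_map_algebraMap p _).eq, mul_assoc, companion]

theorem companion_C_mul_X_sub_C_mul_X_sub_C (a u v : ℍ[ℝ]) :
    companion (C a * (X - C u) * (X - C v)) =
      (C (normSq a) * reducedCharpoly u * reducedCharpoly v).map (algebraMap ℝ ℍ[ℝ]) := by
  have h : companion (C a * (X - C u)) =
      (C (normSq a) * reducedCharpoly u).map (algebraMap ℝ ℍ[ℝ]) := by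
    rw [companion_mul_of_eq_map (companion_C a), companion_X_sub_C, Polynomial.map_mul]
  rw [companion_mul_of_eq_map h, companion_X_sub_C, ← Polynomial.map_mul]

theorem eval_companion_C_mul_X_sub_C_mul_X_sub_C (a u v : ℍ[ℝ]) :
    eval u (companion (C a * (X - C u) * (X - C v))) = 0 ∧
      eval v (companion (C a * (X - C u) * (X - C v))) = 0 := by
  simp only [companion_C_mul_X_sub_C_mul_X_sub_C, eval_map_algebraMap, map_mul,
    aeval_reducedCharpoly_self, mul_zero, zero_mul, and_self]

namespace Quaternion

/-- On real `x` this is `normSq (x ^ 2 + b * x + c)`. -/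
noncomputable def normSqQuadratic (b c : ℍ[ℝ]) : ℂ[X] :=
  (X ^ 2 + C (b.re : ℂ) * X + C (c.re : ℂ)) ^ 2 + (C (b.imI : ℂ) * X + C (c.imI : ℂ)) ^ 2
    + (C (b.imJ : ℂ) * X + C (c.imJ : ℂ)) ^ 2 + (C (b.imK : ℂ) * X + C (c.imK : ℂ)) ^ 2

theorem degree_normSqQuadratic (b c : ℍ[ℝ]) : (normSqQuadratic b c).degree = 4 := by
  unfold normSqQuadratic
  compute_degree!

theorem exists_isRoot_normSqQuadratic (b c : ℍ[ℝ]) : ∃ z, (normSqQuadratic b c).IsRoot z :=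
  Complex.exists_root (by rw [degree_normSqQuadratic]; norm_num)

/-- `X² + bX + c = (X² - 2 Re(z) X + |z|²) + dX + e`, and the first summand vanishes at `z`. -/
theorem eval_normSqQuadratic (d e : ℍ[ℝ]) (z : ℂ) :
    (normSqQuadratic (d - (2 * z.re : ℝ)) (e + (Complex.normSq z : ℝ))).eval z =
      2 * ((normSq d * z.re + (d * star e).re : ℝ) : ℂ) * z
        + ((normSq e - normSq d * Complex.normSq z : ℝ) : ℂ) := by
  have hz : z ^ 2 - 2 * z.re * z + Complex.normSq z = 0 := by
    have h₁ := Complex.add_conj z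
    push_cast at h₁
    linear_combination z * h₁ - Complex.mul_conj z
  simp only [normSqQuadratic, eval_add, eval_pow, eval_mul, eval_C, eval_X, normSq_def', re_mul,
    re_star, imI_star, imJ_star, imK_star, re_add, imI_add, imJ_add, imK_add, re_sub, imI_sub,
    imJ_sub, imK_sub, re_coe, imI_coe, imJ_coe, imK_coe]
  push_cast
  linear_combination (z ^ 2 - 2 * z.re * z + Complex.normSq z + 2 * (d.re * z + e.re)
    + d.re ^ 2 + d.imI ^ 2 + d.imJ ^ 2 + d.imK ^ 2) * hz

/-- For nonreal `z` the hypothesis says that `|d|² X² + 2 Re(d ē) X + |e|²` is `|d|²` times the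
minimal polynomial of `z`, which puts `-d⁻¹ e` on the sphere of `z`. -/
theorem exists_re_normSq_eq_and_mul_add_eq_zero (d e : ℍ[ℝ]) (z : ℂ)
    (h : 2 * ((normSq d * z.re + (d * star e).re : ℝ) : ℂ) * z
        + ((normSq e - normSq d * Complex.normSq z : ℝ) : ℂ) = 0) :
    ∃ v : ℍ[ℝ], v.re = z.re ∧ normSq v = Complex.normSq z ∧ d * v + e = 0 := by
  simp only [Complex.ext_iff, Complex.add_re, Complex.mul_re, Complex.ofReal_re,
    Complex.ofReal_im, Complex.add_im, Complex.mul_im, Complex.re_ofNat, Complex.im_ofNat,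
    Complex.zero_re, Complex.zero_im, mul_zero, zero_mul, sub_zero, add_zero] at h
  obtain ⟨hre, him⟩ := h
  by_cases hz : z.im = 0
  · refine ⟨(z.re : ℍ[ℝ]), rfl, by simp [normSq_coe, Complex.normSq_apply, hz, sq], ?_⟩
    rw [Complex.normSq_apply, hz] at hre
    rw [← normSq_eq_zero, normSq_mul_coe_add]
    linear_combination hre
  have hα : normSq d * z.re + (d * star e).re = 0 := by simpa [hz] using him
  have hβ : normSq e = normSq d * Complex.normSq z := by linear_combination hre - 2 * z.re * hα
  by_cases hd : d = 0
  · rw [hd, map_zero, zero_mul, normSq_eq_zero] at hβ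
    refine ⟨show ℍ[ℝ] from ⟨z.re, z.im, 0, 0⟩, rfl, ?_, by rw [hd, hβ, zero_mul, zero_add]⟩
    rw [normSq_def', Complex.normSq_apply]
    ring
  have hnd : normSq d ≠ 0 := by rwa [Ne, normSq_eq_zero]
  refine ⟨-(d⁻¹ * e), ?_, ?_, by rw [mul_neg, mul_inv_cancel_left₀ hd, neg_add_cancel]⟩
  · have hB : (star d * e).re = (d * star e).re := by
      simp only [re_mul, re_star, imI_star, imJ_star, imK_star]
      ring
    rw [inv_def, smul_mul_assoc, re_neg, re_smul, smul_eq_mul, hB,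
      eq_neg_of_add_eq_zero_right hα, mul_neg, neg_neg, inv_mul_cancel_left₀ hnd]
  · rw [normSq_neg, map_mul, normSq_inv, hβ]
    field_simp

theorem exists_sq_add_mul_add_eq_zero (b c : ℍ[ℝ]) :
    ∃ v : ℍ[ℝ], v ^ 2 + b * v + c = 0 := by
  obtain ⟨z, hz⟩ := exists_isRoot_normSqQuadratic b c
  obtain ⟨v, hre, hn, hv⟩ := exists_re_normSq_eq_and_mul_add_eq_zero
      (b + (2 * z.re : ℝ)) (c - (Complex.normSq z : ℝ)) z <| by
    rw [← eval_normSqQuadratic, add_sub_cancel_right, sub_add_cancel]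
    exact hz
  have hχ := aeval_reducedCharpoly_self v
  rw [aeval_reducedCharpoly, hre, hn] at hχ
  refine ⟨v, ?_⟩
  calc v ^ 2 + b * v + c
      = (v ^ 2 - (2 * z.re : ℝ) * v + (Complex.normSq z : ℝ))
          + ((b + (2 * z.re : ℝ)) * v + (c - (Complex.normSq z : ℝ))) := by noncomm_ring
    _ = 0 := by rw [hχ, hv, add_zero]

theorem exists_eq_C_mul_X_sub_C_mul_X_sub_C {f : ℍ[ℝ][X]} (hf : f.natDegree = 2) :
    ∃ a u v : ℍ[ℝ], a ≠ 0 ∧ f = C a * (X - C u) * (X - C v) := by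
  set a := f.coeff 2
  have ha : a ≠ 0 := by
    have h := leadingCoeff_ne_zero.mpr (ne_zero_of_natDegree_gt (hf ▸ two_pos : 0 < f.natDegree))
    rwa [leadingCoeff, hf] at h
  set b := a⁻¹ * f.coeff 1
  set c := a⁻¹ * f.coeff 0
  obtain ⟨v, hv⟩ := exists_sq_add_mul_add_eq_zero b c
  refine ⟨a, -b - v, v, ha, ?_⟩
  have hsum : -b - v + v = -b := by abel
  have hprod : (-b - v) * v = c := by
    rw [← neg_neg c, ← eq_neg_of_add_eq_zero_left hv]
    noncomm_ring
  rw [mul_assoc, X_sub_C_mul_X_sub_C, hsum, hprod, mul_add, mul_sub, ← mul_assoc, ← C_mul,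
    ← C_mul, mul_neg, mul_inv_cancel_left₀ ha, mul_inv_cancel_left₀ ha]
  conv_lhs => rw [f.as_sum_range_C_mul_X_pow, hf]
  simp only [Finset.sum_range_succ, Finset.range_one, Finset.sum_singleton, pow_zero, mul_one,
    pow_one, map_neg, neg_mul, sub_neg_eq_add]
  abel

end Quaternion

theorem critical_points_of_quadratic_mem_convexHull_roots_of_companion
    (f : Polynomial (Quaternion ℝ)) (hdeg : f.natDegree = 2)
    (r : Quaternion ℝ) (hr : Polynomial.eval r (derivative f) = 0) :
    r ∈ convexHull ℝ {s : Quaternion ℝ | Polynomial.eval s (companion f) = 0} := by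
  obtain ⟨a, u, v, ha, rfl⟩ := exists_eq_C_mul_X_sub_C_mul_X_sub_C hdeg
  rw [eval_derivative_C_mul_X_sub_C_mul_X_sub_C, mul_eq_zero, or_iff_right ha, sub_eq_zero] at hr
  have hmid : r = midpoint ℝ u v := by
    rw [midpoint_eq_smul_add, ← hr, two_mul, ← two_smul ℝ r, smul_smul, invOf_mul_self,
      one_smul]
  refine convexHull_mono (s := {u, v}) ?_ ?_
  · exact Set.pair_subset_iff.mpr (eval_companion_C_mul_X_sub_C_mul_X_sub_C a u v)
  · rw [convexHull_pair, hmid]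
    exact midpoint_mem_segment u v
end

section
/- For every f ∈ ℍ[X], every root of the formal derivative f′ is contained in the snail sn(f). -/
open Polynomial

noncomputable section

/-- The real subalgebra `ℂ_I = ℝ·1 + ℝ·I` of `ℍ`, as an `ℝ`-submodule. -/
def CI (I : Quaternion ℝ) : Submodule ℝ (Quaternion ℝ) :=
  Submodule.span ℝ {1, I}

/-- The orthogonal projection `π_I : ℍ → ℂ_I`, viewed as a map `ℍ → ℍ`. -/
def piI (I : Quaternion ℝ) (a : Quaternion ℝ) : Quaternion ℝ :=
  ((CI I).orthogonalProjectionOnto a : Quaternion ℝ)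

/-- `f_I = ∑ₖ π_I(aₖ) Xᵏ`, the projection of the coefficients of `f` onto `ℂ_I`. -/
def polyProj (I : Quaternion ℝ) (f : Polynomial (Quaternion ℝ)) :
    Polynomial (Quaternion ℝ) :=
  f.sum fun k a => C (piI I a) * X ^ k

open scoped Classical in
/-- `K_{ℂ_I}(f_I)`: the convex hull of the roots of `f_I` in `ℂ_I` if `f_I` is
nonconstant, and all of `ℂ_I` otherwise. -/
def KSet (I : Quaternion ℝ) (f : Polynomial (Quaternion ℝ)) : Set (Quaternion ℝ) :=
  if 0 < (polyProj I f).natDegree then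
    convexHull ℝ {r : Quaternion ℝ | r ∈ CI I ∧ Polynomial.eval r (polyProj I f) = 0}
  else (CI I : Set (Quaternion ℝ))

/-- The Gauss–Lucas snail `sn(f) = ⋃_I K_{ℂ_I}(f_I)`, the union over all `I`
of trace `0` and norm `1`. -/
def snail (f : Polynomial (Quaternion ℝ)) : Set (Quaternion ℝ) :=
  ⋃ (I : Quaternion ℝ) (_ : I.re = 0 ∧ ‖I‖ = 1), KSet I f

/-!
Every quaternion `r` lies in some slice `ℂ_I`. Projecting coefficients onto `ℂ_I` commutes with
differentiation, and since `π_I` is right `ℂ_I`-linear (`π_I(a c) = π_I(a) c` for `c ∈ ℂ_I`, because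
`ℂ_I` is closed under products and conjugation), it also commutes with evaluation at points of
`ℂ_I`: `f_I(x) = π_I(f(x))`. So a root `r ∈ ℂ_I` of `f′` is a root of `(f_I)′`, and as `f_I` is a
complex polynomial under `ℂ ≅ ℂ_I`, the classical Gauss–Lucas theorem puts `r` in `K_{ℂ_I}(f_I)`.
-/

open scoped Quaternion InnerProductSpace

theorem Polynomial.algHom_apply_mem_convexHull_roots_map {A : Type*} [Ring A] [Algebra ℝ A]
    (ι : ℂ →ₐ[ℝ] A) {G : ℂ[X]} (hG : 0 < G.degree) {z : ℂ}
    (hz : (derivative G).eval z = 0) :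
    ι z ∈ convexHull ℝ {w | w ∈ Set.range ι ∧ (G.map (ι : ℂ →+* A)).eval w = 0} := by
  have hzG : z ∈ convexHull ℝ (G.rootSet ℂ) :=
    rootSet_derivative_subset_convexHull_rootSet hG <| by
      simpa [mem_rootSet, hz] using (natDegree_pos_iff_degree_pos.2 hG).ne'
  have hιz : ι z ∈ convexHull ℝ (ι '' G.rootSet ℂ) :=
    ι.toLinearMap.image_convexHull _ ▸ ⟨z, hzG, rfl⟩
  refine convexHull_mono ?_ hιz
  rintro _ ⟨w, hw, rfl⟩
  rw [mem_rootSet, coe_aeval_eq_eval] at hw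
  exact ⟨⟨w, rfl⟩, by rw [eval_map, ← AlgHom.coe_toRingHom, eval₂_hom, hw.2, map_zero]⟩

variable {I : ℍ}

theorem Quaternion.mul_self_eq_neg_one (hre : I.re = 0) (hnorm : ‖I‖ = 1) : I * I = -1 := by
  have hI := Quaternion.self_mul_star I
  rw [Quaternion.star_eq_neg.2 hre, Quaternion.normSq_eq_norm_mul_self, hnorm, mul_neg] at hI
  simpa using congrArg Neg.neg hI

theorem Quaternion.inner_mul_right_eq_inner_mul_star (a b c : ℍ) :
    ⟪a * c, b⟫_ℝ = ⟪a, b * star c⟫_ℝ := by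
  simp only [Quaternion.inner_def, star_mul, star_star, mul_assoc]

theorem Submodule.starProjection_mul_of_mem {K : Submodule ℝ ℍ}
    (hmul : ∀ x ∈ K, ∀ y ∈ K, x * y ∈ K) (hstar : ∀ x ∈ K, star x ∈ K)
    (a : ℍ) {c : ℍ} (hc : c ∈ K) : K.starProjection (a * c) = K.starProjection a * c := by
  refine K.eq_starProjection_of_mem_of_inner_eq_zero
    (hmul _ (K.starProjection_apply_mem a) _ hc) fun w hw => ?_
  rw [← sub_mul, Quaternion.inner_mul_right_eq_inner_mul_star]
  exact K.starProjection_inner_eq_zero a _ (hmul _ hw _ (hstar _ hc))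

theorem mem_CI_iff_mem_range_liftAux (hII : I * I = -1) {x : ℍ} :
    x ∈ CI I ↔ x ∈ Set.range (Complex.liftAux I hII) := by
  rw [CI, Submodule.mem_span_pair]
  constructor
  · rintro ⟨a, b, rfl⟩
    exact ⟨⟨a, b⟩, by simp [Algebra.algebraMap_eq_smul_one]⟩
  · rintro ⟨z, rfl⟩
    exact ⟨z.re, z.im, by simp [Algebra.algebraMap_eq_smul_one]⟩

theorem mul_mem_CI (hII : I * I = -1) {x y : ℍ} (hx : x ∈ CI I) (hy : y ∈ CI I) :
    x * y ∈ CI I := by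
  rw [mem_CI_iff_mem_range_liftAux hII] at *
  obtain ⟨z, rfl⟩ := hx
  obtain ⟨w, rfl⟩ := hy
  exact ⟨z * w, map_mul _ _ _⟩

theorem star_mem_CI (hre : I.re = 0) {x : ℍ} (hx : x ∈ CI I) : star x ∈ CI I := by
  rw [CI, Submodule.mem_span_pair] at *
  obtain ⟨a, b, rfl⟩ := hx
  exact ⟨a, -b, by simp [Quaternion.star_eq_neg.2 hre]⟩

theorem pow_mem_CI (hII : I * I = -1) {x : ℍ} (hx : x ∈ CI I) (k : ℕ) : x ^ k ∈ CI I := by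
  rw [mem_CI_iff_mem_range_liftAux hII] at *
  obtain ⟨z, rfl⟩ := hx
  exact ⟨z ^ k, map_pow _ _ _⟩

theorem piI_eq_starProjection (a : ℍ) : piI I a = (CI I).starProjection a := rfl

theorem piI_mul (hre : I.re = 0) (hII : I * I = -1) (a : ℍ) {c : ℍ} (hc : c ∈ CI I) :
    piI I (a * c) = piI I a * c :=
  Submodule.starProjection_mul_of_mem (fun _ hx _ hy => mul_mem_CI hII hx hy)
    (fun _ hx => star_mem_CI hre hx) a hc

theorem coeff_polyProj (f : Polynomial ℍ) (n : ℕ) :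
    (polyProj I f).coeff n = piI I (f.coeff n) := by
  simp only [polyProj, Polynomial.sum_def, finsetSum_coeff, coeff_C_mul_X_pow]
  rw [Finset.sum_ite_eq]
  split_ifs with h
  · rfl
  · rw [notMem_support_iff.1 h, piI_eq_starProjection, map_zero]

theorem derivative_polyProj (f : Polynomial ℍ) :
    derivative (polyProj I f) = polyProj I (derivative f) := by
  ext n : 1
  simp only [coeff_derivative, coeff_polyProj, ← Nat.cast_succ, ← nsmul_eq_mul',
    piI_eq_starProjection, map_nsmul]

theorem eval_polyProj (hre : I.re = 0) (hII : I * I = -1) (f : Polynomial ℍ) {x : ℍ}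
    (hx : x ∈ CI I) :
    (polyProj I f).eval x = piI I (f.eval x) :=
  calc (polyProj I f).eval x = ∑ k ∈ f.support, piI I (f.coeff k) * x ^ k := by
        simp only [polyProj, Polynomial.sum_def, eval_finsetSum, C_mul_X_pow_eq_monomial,
          eval_monomial]
    _ = ∑ k ∈ f.support, piI I (f.coeff k * x ^ k) :=
        Finset.sum_congr rfl fun k _ => (piI_mul hre hII _ (pow_mem_CI hII hx k)).symm
    _ = piI I (f.eval x) := by
        rw [eval_eq_sum, Polynomial.sum_def, piI_eq_starProjection, map_sum]
        rfl

theorem polyProj_mem_lifts (hII : I * I = -1) (f : Polynomial ℍ) :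
    polyProj I f ∈ lifts (Complex.liftAux I hII : ℂ →+* ℍ) := by
  rw [lifts_iff_coeff_lifts]
  intro n
  rw [coeff_polyProj]
  exact (mem_CI_iff_mem_range_liftAux hII).1 ((CI I).starProjection_apply_mem _)

theorem exists_mem_CI (r : ℍ) : ∃ I : ℍ, I.re = 0 ∧ ‖I‖ = 1 ∧ r ∈ CI I := by
  have hr : r.re • 1 + r.im = r := by
    rw [← Algebra.algebraMap_eq_smul_one]
    exact r.re_add_im
  by_cases him : r.im = 0
  · refine ⟨(Complex.I : ℂ), by simp, ?_, Submodule.mem_span_pair.2 ⟨r.re, 0, ?_⟩⟩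
    · rw [norm_eq_sqrt_real_inner, Quaternion.inner_self, Quaternion.normSq_def']
      simp
    · simpa [him] using hr
  · have hn : ‖r.im‖ ≠ 0 := norm_ne_zero_iff.2 him
    refine ⟨‖r.im‖⁻¹ • r.im, by simp, by simp [norm_smul, hn],
      Submodule.mem_span_pair.2 ⟨r.re, ‖r.im‖, ?_⟩⟩
    rw [smul_smul, mul_inv_cancel₀ hn, one_smul, hr]

theorem mem_KSet_of_eval_derivative_eq_zero (hre : I.re = 0) (hnorm : ‖I‖ = 1)
    {f : Polynomial ℍ} {r : ℍ} (hrI : r ∈ CI I) (hr : (derivative f).eval r = 0) :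
    r ∈ KSet I f := by
  have hII := Quaternion.mul_self_eq_neg_one hre hnorm
  set ι := Complex.liftAux I hII
  unfold KSet
  split_ifs with hdeg
  · obtain ⟨G, hG⟩ := (mem_lifts _).1 (polyProj_mem_lifts hII f)
    obtain ⟨z, rfl⟩ := (mem_CI_iff_mem_range_liftAux hII).1 hrI
    have hGz : (derivative G).eval z = 0 := by
      apply (ι : ℂ →+* ℍ).injective
      -- `ι (G′(z)) = (f_I)′(r) = π_I (f′(r)) = 0`
      rw [map_zero, ← eval₂_hom, ← eval_map, ← derivative_map, hG, derivative_polyProj,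
        AlgHom.coe_toRingHom, eval_polyProj hre hII _ hrI, hr, piI_eq_starProjection, map_zero]
    have hGdeg : 0 < G.degree := by
      rwa [← natDegree_pos_iff_degree_pos, ← natDegree_map (ι : ℂ →+* ℍ), hG]
    refine convexHull_mono ?_ (algHom_apply_mem_convexHull_roots_map ι hGdeg hGz)
    rintro w ⟨hw, hGw⟩
    exact ⟨(mem_CI_iff_mem_range_liftAux hII).2 hw, hG ▸ hGw⟩
  · exact hrI

theorem critical_points_mem_snail
    (f : Polynomial (Quaternion ℝ)) (r : Quaternion ℝ)
    (hr : Polynomial.eval r (derivative f) = 0) :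
    r ∈ snail f := by
  obtain ⟨I, hre, hnorm, hrI⟩ := exists_mem_CI r
  exact Set.mem_iUnion₂.2 ⟨I, ⟨hre, hnorm⟩, mem_KSet_of_eval_derivative_eq_zero hre hnorm hrI hr⟩
end
end

section
/- Let g ∈ ℝ[X] and let f = g.map φ ∈ ℍ[X], where φ : ℝ → ℍ is the canonical algebra map. Then every non-real root of f is spherical: if λ ∈ ℍ \ ℝ satisfies f(λ) = 0, then every r ∈ ℍ with r² − tr(λ)·r + n(λ) = 0 also satisfies f(r) = 0. -/
/-! A non-real quaternion `λ` is not a root of any real polynomial of degree one, so its minimal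
polynomial over `ℝ` is the monic quadratic `X² − tr(λ) X + n(λ)` that it satisfies. Hence this
quadratic divides every real polynomial vanishing at `λ`, and evaluating at any of its roots `r`
(an algebra map on `ℝ[X]`, real coefficients being central) kills the polynomial as well. -/

open Polynomial

theorem minpoly.eq_of_natDegree_eq_two {K A : Type*} [Field K] [Ring A] [Nontrivial A]
    [Algebra K A] {x : A} {p : K[X]} (hp : p.Monic) (hdeg : p.natDegree = 2)
    (hx : Polynomial.aeval x p = 0) (hxK : x ∉ Set.range (algebraMap K A)) : minpoly K x = p := by
  have hint : IsIntegral K x := ⟨p, hp, hx⟩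
  refine (eq_of_monic_of_dvd_of_natDegree_le (minpoly.monic hint) hp
    (minpoly.dvd K x hx) ?_).symm
  rw [hdeg, minpoly.two_le_natDegree_iff hint]
  exact hxK

open scoped Quaternion

namespace Quaternion

noncomputable def charPoly (q : ℍ) : ℝ[X] :=
  X ^ 2 - C (2 * q.re) * X + C (normSq q)

theorem charPoly_monic (q : ℍ) : q.charPoly.Monic := by
  unfold charPoly
  monicity!

theorem charPoly_natDegree (q : ℍ) : q.charPoly.natDegree = 2 := by
  unfold charPoly
  compute_degree!

theorem aeval_charPoly (q x : ℍ) :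
    aeval x q.charPoly = x ^ 2 - (2 * q.re) • x + ((normSq q : ℝ) : ℍ) := by
  simp [charPoly, Algebra.smul_def, algebraMap_def]

theorem aeval_self_charPoly (q : ℍ) : aeval q q.charPoly = 0 := by
  have htrace : (2 * q.re) • q = (q + star q) * q := by
    rw [self_add_star', Algebra.smul_def, algebraMap_def]
  rw [aeval_charPoly, htrace, ← star_mul_self]
  noncomm_ring

theorem minpoly_eq_charPoly {q : ℍ} (hq : q ∉ Set.range (algebraMap ℝ ℍ)) :
    minpoly ℝ q = q.charPoly :=
  minpoly.eq_of_natDegree_eq_two q.charPoly_monic q.charPoly_natDegree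
    q.aeval_self_charPoly hq

end Quaternion

theorem nonreal_roots_of_real_poly_are_spherical
    (g : Polynomial ℝ) (f : Polynomial (Quaternion ℝ))
    (hf : f = g.map (algebraMap ℝ (Quaternion ℝ)))
    (lam : Quaternion ℝ)
    (hlam : lam ∉ Set.range (algebraMap ℝ (Quaternion ℝ)))
    (hroot : Polynomial.eval lam f = 0) :
    ∀ r : Quaternion ℝ,
      r ^ 2 - (2 * lam.re) • r + ((Quaternion.normSq lam : ℝ) : Quaternion ℝ) = 0 →
        Polynomial.eval r f = 0 := by
  intro r hr
  subst hf
  rw [eval_map_algebraMap] at hroot ⊢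
  obtain ⟨h, rfl⟩ := Quaternion.minpoly_eq_charPoly hlam ▸ minpoly.dvd ℝ lam hroot
  rw [map_mul, Quaternion.aeval_charPoly, hr, zero_mul]
end
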